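/- arXiv:1910.12280 — 2 statements merged into one kernel-verified Lean document; each statement's English description precedes it below -/
import Mathlib

section
/- Let R be a commutative ring with a permutable weak regular sequence s_1,…,s_k of non-units, S = R[x_1,…,x_n], and F = S^r with standard basis e_1,…,e_r. For l = 1,…,m let f_l = c_l·b_l·x^{u_l}·e_{k_l}, where c_l is a unit of R, b_l = ∏_j s_j^{α_{lj}} is an s-monomial, u_l ∈ ℕ^n, and k_l ∈ {1,…,r}. Let φ : S^m → F be the S-linear map sending the standard basis vector g_l to f_l. Then the kernel of φ is generated by the elements r_{ij} = c_i^{−1}(∏_t s_t^{max(α_{it},α_{jt})−α_{it}})·x^{sup(u_i,u_j)−u_i}·g_i − c_j^{−1}(∏_t s_t^{max(α_{it},α_{jt})−α_{jt}})·x^{sup(u_i,u_j)−u_j}·g_j, taken over all pairs 1 ≤ i < j ≤ m with k_i = k_j, where sup(u_i,u_j) is the componentwise maximum in ℕ^n. -/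
open MvPolynomial
open scoped MonomialOrder

namespace PaperGB

variable {n : ℕ} {R : Type*} [CommSemiring R]

/-- The degree (leading exponent) of a multivariate polynomial w.r.t. a monomial order. -/
noncomputable def mDeg (m : MonomialOrder (Fin n)) (f : MvPolynomial (Fin n) R) :
    Fin n →₀ ℕ :=
  m.toSyn.symm (f.support.sup fun d => m.toSyn d)

/-- The leading coefficient. -/
noncomputable def mLC (m : MonomialOrder (Fin n)) (f : MvPolynomial (Fin n) R) : R :=
  f.coeff (mDeg m f)

/-- The leading term. -/
noncomputable def mLT (m : MonomialOrder (Fin n)) (f : MvPolynomial (Fin n) R) :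
    MvPolynomial (Fin n) R :=
  monomial (mDeg m f) (mLC m f)

variable {R : Type*} [CommRing R]

/-- The leading term ideal. -/
noncomputable def mLTIdeal (m : MonomialOrder (Fin n)) (I : Ideal (MvPolynomial (Fin n) R)) :
    Ideal (MvPolynomial (Fin n) R) :=
  Ideal.span ((fun g => mLT m g) '' {g | g ∈ I ∧ g ≠ 0})

/-- `f` is a Gröbner basis of `I`. -/
def IsGroebnerBasis (m : MonomialOrder (Fin n)) (I : Ideal (MvPolynomial (Fin n) R))
    {k : ℕ} (f : Fin k → MvPolynomial (Fin n) R) : Prop :=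
  (∀ i, f i ≠ 0) ∧ (∀ i, f i ∈ I) ∧
    Ideal.span (Set.range fun i => mLT m (f i)) = mLTIdeal m I

/-- `g` reduces to zero modulo the family `f`. -/
def ReducesToZero (m : MonomialOrder (Fin n)) {k : ℕ} (f : Fin k → MvPolynomial (Fin n) R)
    (g : MvPolynomial (Fin n) R) : Prop :=
  ∃ p : Fin k → MvPolynomial (Fin n) R,
    g = ∑ i, p i * f i ∧
    ∀ i, p i * f i ≠ 0 → mDeg m (p i) + mDeg m (f i) ≼[m] mDeg m g

/-- A weakly regular sequence. -/
def IsWeakRegularSeq {k : ℕ} (s : Fin k → R) : Prop :=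
  ∀ i : Fin k, ∀ x : R,
    s i * x ∈ Ideal.span (s '' {j | j < i}) → x ∈ Ideal.span (s '' {j | j < i})

/-- A permutable weak regular sequence of non-units. -/
def IsPermutableWeakRegularSeq {k : ℕ} (s : Fin k → R) : Prop :=
  (∀ i, ¬ IsUnit (s i)) ∧ ∀ σ : Equiv.Perm (Fin k), IsWeakRegularSeq (s ∘ σ)

/-- `M` has a free resolution `0 → F_p → ⋯ → F_0 → M → 0` by finitely generated
free `S`-modules. -/
def HasFiniteFreeResolutionOfLength (S : Type*) [CommRing S] (M : Type*) [AddCommGroup M]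
    [Module S M] (p : ℕ) : Prop :=
  ∃ (d : ℕ → ℕ) (g : ∀ i : ℕ, (Fin (d (i + 1)) → S) →ₗ[S] (Fin (d i) → S))
    (ε : (Fin (d 0) → S) →ₗ[S] M),
    (∀ i, p < i → d i = 0) ∧
    Function.Surjective ε ∧
    LinearMap.range (g 0) = LinearMap.ker ε ∧
    ∀ i, LinearMap.range (g (i + 1)) = LinearMap.ker (g i)

/-- `M` has an infinite free resolution `⋯ → F_p → F_p → F_p → F_{p-1} → ⋯ → F_0 → M → 0`
by finitely generated free `S`-modules, whose modules are constant from stage `p` on. -/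
def HasEventuallyConstantFreeResolution (S : Type*) [CommRing S] (M : Type*) [AddCommGroup M]
    [Module S M] (p : ℕ) : Prop :=
  ∃ (d : ℕ → ℕ) (g : ∀ i : ℕ, (Fin (d (i + 1)) → S) →ₗ[S] (Fin (d i) → S))
    (ε : (Fin (d 0) → S) →ₗ[S] M),
    (∀ i, p ≤ i → d i = d p) ∧
    Function.Surjective ε ∧
    LinearMap.range (g 0) = LinearMap.ker ε ∧
    ∀ i, LinearMap.range (g (i + 1)) = LinearMap.ker (g i)

end PaperGB

open PaperGB

/-!
Since every `f_l` is a single term, a syzygy `w` splits along the monomials `x^v` and the basis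
vectors `e_q`: the `(v, q)`-part of `∑ w_l f_l = 0` is a relation `∑ a_l b_l = 0` in `R` among the
`s`-monomials `b_l` with `k_l = q` and `u_l ≤ v`. It therefore suffices to show that, over `R`,
the relations among `s`-monomials are generated by the binomial ones
`(b_{ij} / b_i) e_i - (b_{ij} / b_j) e_j`, where `b_{ij}` is the least common multiple.

This goes by induction on the total degree. Pick an `s_t` dividing some `b_l`. Modulo `s_t` the
monomials divisible by `s_t` vanish and the others satisfy a relation for the shorter permutable
weak regular sequence in `R / (s_t)`; lift its binomial representation. What is left is divisible
by `s_t` in the coordinates where `s_t ∤ b_l`, and since `s_t` is a nonzerodivisor it can be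
cancelled, which lowers the degree.
-/

universe u

open Set Submodule

section SMonomial

variable {A : Type*} [CommRing A] {k : ℕ}

def sMonomial (s : Fin k → A) (β : Fin k → ℕ) : A :=
  ∏ t, s t ^ β t

lemma sMonomial_add (s : Fin k → A) (β γ : Fin k → ℕ) :
    sMonomial s (β + γ) = sMonomial s β * sMonomial s γ := by
  simp only [sMonomial, Pi.add_apply, pow_add, Finset.prod_mul_distrib]

lemma sMonomial_single (s : Fin k → A) (t : Fin k) (m : ℕ) :
    sMonomial s (Pi.single t m) = s t ^ m := by
  simp [sMonomial, Pi.single_apply]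

lemma sMonomial_tsub_mul (s : Fin k → A) {β γ : Fin k → ℕ} (h : γ ≤ β) :
    sMonomial s (β - γ) * sMonomial s γ = sMonomial s β := by
  rw [← sMonomial_add, tsub_add_cancel_of_le h]

lemma map_sMonomial {B : Type*} [CommRing B] (f : A →+* B) (s : Fin k → A) (β : Fin k → ℕ) :
    f (sMonomial s β) = sMonomial (f ∘ s) β := by
  simp [sMonomial]

lemma sMonomial_eq_pow_mul_succAbove (s : Fin (k + 1) → A) (t : Fin (k + 1))
    (β : Fin (k + 1) → ℕ) :
    sMonomial s β = s t ^ β t * sMonomial (s ∘ t.succAbove) (β ∘ t.succAbove) :=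
  Fin.prod_univ_succAbove _ t

lemma map_sMonomial_of_map_eq_zero {B : Type*} [CommRing B] (f : A →+* B) {s : Fin (k + 1) → A}
    {t : Fin (k + 1)} (hf : f (s t) = 0) (β : Fin (k + 1) → ℕ) :
    f (sMonomial s β) =
      if β t = 0 then sMonomial (fun j => f (s (t.succAbove j))) (β ∘ t.succAbove) else 0 := by
  rw [map_sMonomial, sMonomial_eq_pow_mul_succAbove _ t]
  split_ifs with h <;> simp [h, hf, Function.comp_def]

/-- The exponent `1 - β t` is truncated: it is `1` if `β t = 0` and `0` otherwise. -/
lemma mul_sMonomial_tsub_single (s : Fin k → A) (t : Fin k) (β : Fin k → ℕ) :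
    s t * sMonomial s (β - Pi.single t 1) = s t ^ (1 - β t) * sMonomial s β := by
  rw [← sMonomial_single s t (1 - β t), ← sMonomial_add]
  nth_rw 1 [← pow_one (s t)]
  rw [← sMonomial_single, ← sMonomial_add]
  congr 1
  ext t'
  rcases eq_or_ne t' t with rfl | ht
  · simp; omega
  · simp [ht]

end SMonomial

section Relation

variable {A : Type*} [CommRing A] {k : ℕ} {ι : Type*} [Fintype ι]

lemma sum_sum_comp_succAbove_lt {α : ι → Fin (k + 1) → ℕ} {l₁ : ι} {t : Fin (k + 1)}
    (ht : α l₁ t ≠ 0) : ∑ l, ∑ j, α l (t.succAbove j) < ∑ l, ∑ j, α l j := by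
  refine Finset.sum_lt_sum (fun l _ => ?_) ⟨l₁, Finset.mem_univ _, ?_⟩
  · rw [Fin.sum_univ_succAbove (α l) t]
    exact Nat.le_add_left _ _
  · rw [Fin.sum_univ_succAbove (α l₁) t]
    exact Nat.lt_add_of_pos_left (Nat.pos_of_ne_zero ht)

lemma sum_sum_tsub_single_lt {α : ι → Fin k → ℕ} {l₁ : ι} {t : Fin k} (ht : α l₁ t ≠ 0) :
    ∑ l, ∑ j, (α l - Pi.single t 1 : Fin k → ℕ) j < ∑ l, ∑ j, α l j :=
  Finset.sum_lt_sum (fun _ _ => Finset.sum_le_sum fun _ _ => tsub_le_self)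
    ⟨l₁, Finset.mem_univ _, Finset.sum_lt_sum (fun _ _ => tsub_le_self)
      ⟨t, Finset.mem_univ _, by simp; omega⟩⟩

lemma sum_map_ite_mul_sMonomial_succAbove {B : Type*} [CommRing B] (f : A →+* B)
    {s : Fin (k + 1) → A} {t : Fin (k + 1)} (hf : f (s t) = 0) (α : ι → Fin (k + 1) → ℕ)
    (a : ι → A) :
    ∑ l, f (if α l t = 0 then a l else 0) *
        sMonomial (fun j => f (s (t.succAbove j))) (α l ∘ t.succAbove) =
      f (∑ l, a l * sMonomial s (α l)) := by
  rw [map_sum]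
  refine Finset.sum_congr rfl fun l _ => ?_
  rw [map_mul, map_sMonomial_of_map_eq_zero f hf]
  split_ifs <;> simp

end Relation

section WeakRegular

variable {A : Type*} [CommRing A] {k : ℕ}

lemma eq_zero_of_mul_eq_zero_of_forall_isWeakRegularSeq {s : Fin (k + 1) → A}
    (hs : ∀ σ : Equiv.Perm (Fin (k + 1)), IsWeakRegularSeq (s ∘ σ)) (t : Fin (k + 1)) {x : A}
    (hx : s t * x = 0) : x = 0 := by
  simpa [Fin.not_lt_zero] using hs (Equiv.swap 0 t) 0 x (by simpa using hx)

lemma Fin.setOf_lt_succ (i : Fin k) :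
    {j : Fin (k + 1) | j < i.succ} = insert 0 (Fin.succ '' {j | j < i}) := by
  ext j
  cases j using Fin.cases <;> simp [Fin.succ_pos]

lemma IsWeakRegularSeq.quotient_tail {s : Fin (k + 1) → A} (hs : IsWeakRegularSeq s) :
    IsWeakRegularSeq fun j => Ideal.Quotient.mk (Ideal.span {s 0}) (s j.succ) := by
  intro i x hx
  obtain ⟨x, rfl⟩ := Ideal.Quotient.mk_surjective x
  have hmem : ∀ y : A, Ideal.Quotient.mk (Ideal.span {s 0}) y ∈
      Ideal.span ((fun j => Ideal.Quotient.mk (Ideal.span {s 0}) (s j.succ)) '' {j | j < i}) ↔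
      y ∈ Ideal.span (s '' {j | j < i.succ}) := by
    intro y
    rw [show (fun j => Ideal.Quotient.mk (Ideal.span {s 0}) (s j.succ)) '' {j | j < i} =
      Ideal.Quotient.mk _ '' (s '' (Fin.succ '' {j | j < i})) by simp only [image_image],
      ← Ideal.map_span, ← Ideal.mem_comap,
      Ideal.comap_map_of_surjective' _ Ideal.Quotient.mk_surjective, Ideal.mk_ker,
      Fin.setOf_lt_succ, image_insert_eq, Ideal.span_insert, sup_comm]
  rw [← map_mul, hmem] at hx
  rw [hmem]
  exact hs i.succ x hx

lemma isWeakRegularSeq_quotient_succAbove {s : Fin (k + 1) → A}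
    (hs : ∀ σ : Equiv.Perm (Fin (k + 1)), IsWeakRegularSeq (s ∘ σ)) (t : Fin (k + 1))
    (τ : Equiv.Perm (Fin k)) :
    IsWeakRegularSeq ((fun j => Ideal.Quotient.mk (Ideal.span {s t}) (s (t.succAbove j))) ∘ τ) := by
  let σ : Equiv.Perm (Fin (k + 1)) :=
    (finSuccEquiv' 0).trans ((Equiv.optionCongr τ).trans (finSuccEquiv' t).symm)
  have hσ0 : σ 0 = t := by simp [σ]
  have hσsucc : ∀ j, σ j.succ = t.succAbove (τ j) := by
    intro j
    have h : finSuccEquiv' 0 j.succ = some j := by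
      rw [← Fin.zero_succAbove, finSuccEquiv'_succAbove]
    simp [σ, h]
  have h := IsWeakRegularSeq.quotient_tail (hs σ)
  rw [Function.comp_apply, hσ0] at h
  simpa [hσsucc, Function.comp_def] using h

lemma sum_mul_sMonomial_tsub_single_eq_zero {ι : Type*} [Fintype ι] {s : Fin (k + 1) → A}
    (hs : ∀ σ : Equiv.Perm (Fin (k + 1)), IsWeakRegularSeq (s ∘ σ)) (α : ι → Fin (k + 1) → ℕ)
    (t : Fin (k + 1)) {d v : ι → A} (hv : ∀ l, d l = s t ^ (1 - α l t) * v l)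
    (hd : ∑ l, d l * sMonomial s (α l) = 0) :
    ∑ l, v l * sMonomial s (α l - Pi.single t 1) = 0 := by
  refine eq_zero_of_mul_eq_zero_of_forall_isWeakRegularSeq hs t ?_
  rw [Finset.mul_sum, ← hd]
  refine Finset.sum_congr rfl fun l _ => ?_
  rw [hv l]
  linear_combination v l * mul_sMonomial_tsub_single s t (α l)

end WeakRegular

section SSyzygy

variable {A : Type*} [CommRing A] {k : ℕ} {ι : Type*}

lemma exists_mem_span_sub_mem_of_mk_mem_span (I : Ideal A) {X : Set (ι → A)} {a : ι → A}
    (h : (fun l => Ideal.Quotient.mk I (a l)) ∈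
      span (A ⧸ I) ((fun x l => Ideal.Quotient.mk I (x l)) '' X)) :
    ∃ b ∈ span A X, ∀ l, a l - b l ∈ I := by
  let π := (Ideal.Quotient.mkₐ A I).toLinearMap.compLeft ι
  rw [← restrictScalars_mem A, restrictScalars_span A _ Ideal.Quotient.mk_surjective,
    show (fun x l => Ideal.Quotient.mk I (x l)) = π from rfl, span_image] at h
  obtain ⟨b, hb, hπ⟩ := h
  exact ⟨b, hb, fun l => Ideal.Quotient.eq.mp (congrFun hπ l).symm⟩

lemma exists_eq_pow_mul_of_sub_mem_span_singleton (s : Fin k → A) (α : ι → Fin k → ℕ)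
    (t : Fin k) {G : Set ι} {a b : ι → A} (haG : ∀ l ∉ G, a l = 0)
    (hbG : ∀ l, b l ≠ 0 → l ∈ G ∧ α l t = 0) (hab : ∀ l, α l t = 0 → a l - b l ∈ Ideal.span {s t}) :
    ∃ v : ι → A, (∀ l, a l - b l = s t ^ (1 - α l t) * v l) ∧ ∀ l ∉ G, v l = 0 := by
  have hdiv : ∀ l, ∃ y, a l - b l = s t ^ (1 - α l t) * y ∧ (l ∉ G → y = 0) := by
    intro l
    by_cases hl : l ∈ G
    · by_cases h0 : α l t = 0
      · obtain ⟨y, hy⟩ := Ideal.mem_span_singleton'.mp (hab l h0)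
        exact ⟨y, by rw [← hy, h0]; ring, absurd hl⟩
      · have hb0 : b l = 0 := by_contra fun h => h0 (hbG l h).2
        exact ⟨a l, by simp [hb0, show 1 - α l t = 0 by omega], absurd hl⟩
    · have hb0 : b l = 0 := by_contra fun h => hl (hbG l h).1
      exact ⟨0, by simp [haG l hl, hb0], fun _ => rfl⟩
  choose v hv hvG using hdiv
  exact ⟨v, hv, hvG⟩

variable [DecidableEq ι]

def sSyzygy (s : Fin k → A) (α : ι → Fin k → ℕ) (i j : ι) : ι → A :=
  Pi.single i (sMonomial s (α i ⊔ α j - α i)) - Pi.single j (sMonomial s (α i ⊔ α j - α j))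

lemma apply_eq_zero_of_mem_span_sSyzygy (s : Fin k → A) (α : ι → Fin k → ℕ) {G : Set ι}
    {b : ι → A} (hb : b ∈ span A (image2 (sSyzygy s α) G G)) {l : ι} (hl : l ∉ G) : b l = 0 := by
  have hle : span A (image2 (sSyzygy s α) G G) ≤ Submodule.pi Gᶜ fun _ => ⊥ := by
    rw [span_le]
    rintro _ ⟨i, hi, j, hj, rfl⟩ l hl
    have : l ≠ i ∧ l ≠ j := ⟨fun h => hl (h ▸ hi), fun h => hl (h ▸ hj)⟩
    simp [sSyzygy, this]
  simpa using (Submodule.mem_pi.mp (hle hb)) l hl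

lemma image2_sSyzygy_succAbove {B : Type*} [CommRing B] (f : A →+* B) (s : Fin (k + 1) → A)
    (α : ι → Fin (k + 1) → ℕ) (t : Fin (k + 1)) {G : Set ι} (hG : ∀ l ∈ G, α l t = 0) :
    image2 (sSyzygy (fun j => f (s (t.succAbove j))) fun l => α l ∘ t.succAbove) G G =
      (fun x l => f (x l)) '' image2 (sSyzygy s α) G G := by
  rw [image_image2]
  refine image2_congr fun i hi j hj => ?_
  ext l
  simp only [sSyzygy, Pi.sub_apply, map_sub, Pi.apply_single (fun _ => f) (fun _ => map_zero f),
    map_sMonomial, sMonomial_eq_pow_mul_succAbove (f ∘ s) t]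
  simp [hG i hi, hG j hj, Function.comp_def]
  rfl

lemma pow_mul_sSyzygy_tsub_single (s : Fin k → A) (α : ι → Fin k → ℕ) (t : Fin k) (i j : ι) :
    (fun l => s t ^ (1 - α l t) * sSyzygy s (fun l => α l - Pi.single t 1) i j l) =
      s t ^ (1 - max (α i t) (α j t)) • sSyzygy s α i j := by
  have key : ∀ i' ∈ ({i, j} : Set ι), s t ^ (1 - α i' t) *
      sMonomial s ((α i - Pi.single t 1) ⊔ (α j - Pi.single t 1) - (α i' - Pi.single t 1)) =
      s t ^ (1 - max (α i t) (α j t)) * sMonomial s (α i ⊔ α j - α i') := by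
    rintro i' hi'
    rw [← sMonomial_single, ← sMonomial_single, ← sMonomial_add, ← sMonomial_add]
    congr 1
    ext t'
    rcases eq_or_ne t' t with rfl | ht <;> rcases hi' with rfl | rfl <;> simp [*] <;> omega
  ext l
  simp only [sSyzygy, Pi.sub_apply, Pi.smul_apply, smul_eq_mul, mul_sub, Pi.single_apply]
  congr 1 <;> split_ifs with h <;> simp [h, key]

lemma pow_mul_mem_span_sSyzygy (s : Fin k → A) (α : ι → Fin k → ℕ) (t : Fin k) {G : Set ι}
    {v : ι → A} (hv : v ∈ span A (image2 (sSyzygy s fun l => α l - Pi.single t 1) G G)) :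
    (fun l => s t ^ (1 - α l t) * v l) ∈ span A (image2 (sSyzygy s α) G G) := by
  let D := LinearMap.mulLeft A fun l => s t ^ (1 - α l t)
  have hle : span A (image2 (sSyzygy s fun l => α l - Pi.single t 1) G G) ≤
      (span A (image2 (sSyzygy s α) G G)).comap D := by
    rw [span_le]
    rintro _ ⟨i, hi, j, hj, rfl⟩
    rw [SetLike.mem_coe, mem_comap]
    change (fun l => s t ^ (1 - α l t) * _) ∈ _
    rw [pow_mul_sSyzygy_tsub_single]
    exact smul_mem _ _ (subset_span (mem_image2_of_mem hi hj))
  exact hle hv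

variable [Fintype ι]

lemma sum_sSyzygy_mul_sMonomial (s : Fin k → A) (α : ι → Fin k → ℕ) (i j : ι) :
    ∑ l, sSyzygy s α i j l * sMonomial s (α l) = 0 := by
  simp [sSyzygy, sub_mul, Pi.single_apply, sMonomial_tsub_mul, le_sup_left, le_sup_right]

lemma sum_mul_sMonomial_eq_zero_of_mem_span_sSyzygy (s : Fin k → A) (α : ι → Fin k → ℕ)
    {G : Set ι} {b : ι → A} (hb : b ∈ span A (image2 (sSyzygy s α) G G)) :
    ∑ l, b l * sMonomial s (α l) = 0 := by
  have hle : span A (image2 (sSyzygy s α) G G) ≤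
      LinearMap.ker (Fintype.linearCombination A fun l => sMonomial s (α l)) := by
    rw [span_le]
    rintro _ ⟨i, -, j, -, rfl⟩
    simpa [Fintype.linearCombination_apply] using sum_sSyzygy_mul_sMonomial s α i j
  simpa [Fintype.linearCombination_apply] using hle hb

lemma mem_span_sSyzygy_of_sum_eq_zero (s : Fin k → A) {α : ι → Fin k → ℕ} (hα : ∀ l, α l = 0)
    {G : Set ι} {a : ι → A} (haG : ∀ l ∉ G, a l = 0) (ha : ∑ l, a l = 0) :
    a ∈ span A (image2 (sSyzygy s α) G G) := by
  obtain rfl | hne := eq_or_ne a 0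
  · exact zero_mem _
  obtain ⟨l₀, hl₀⟩ := Function.ne_iff.mp hne
  have hsyz : ∀ i j, sSyzygy s α i j = Pi.single i 1 - Pi.single j 1 := by
    simp [sSyzygy, hα, sMonomial]
  have hsum : a = ∑ l, a l • sSyzygy s α l l₀ := by
    simp only [hsyz, smul_sub, Finset.sum_sub_distrib, ← Finset.sum_smul, ha, zero_smul, sub_zero]
    ext l
    simp [Finset.sum_apply, Pi.single_apply]
  rw [hsum]
  refine sum_mem fun l _ => ?_
  by_cases hl : l ∈ G
  · exact smul_mem _ _ (subset_span (mem_image2_of_mem hl (not_not.mp (mt (haG l₀) hl₀))))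
  · simp [haG l hl]

theorem mem_span_sSyzygy_of_sum_mul_sMonomial_eq_zero {A : Type u} [CommRing A] {k : ℕ}
    {s : Fin k → A} (hs : ∀ σ : Equiv.Perm (Fin k), IsWeakRegularSeq (s ∘ σ))
    (α : ι → Fin k → ℕ) {G : Set ι} {a : ι → A} (haG : ∀ l ∉ G, a l = 0)
    (ha : ∑ l, a l * sMonomial s (α l) = 0) :
    a ∈ span A (image2 (sSyzygy s α) G G) := by
  induction hD : ∑ l, ∑ t, α l t using Nat.strong_induction_on generalizing A k s α G a with
  | _ D ih =>
  by_cases hα : ∀ l, α l = 0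
  · exact mem_span_sSyzygy_of_sum_eq_zero s hα haG (by simpa [hα, sMonomial] using ha)
  obtain ⟨l₁, hl₁⟩ := not_forall.mp hα
  obtain ⟨t, ht⟩ := Function.ne_iff.mp hl₁
  replace ht : α l₁ t ≠ 0 := ht
  cases k with
  | zero => exact t.elim0
  | succ k =>
  let G' := {l | l ∈ G ∧ α l t = 0}
  have hdeg_quot : ∑ l, ∑ j, (α l ∘ t.succAbove) j < D := hD ▸ sum_sum_comp_succAbove_lt ht
  have hdeg_div : ∑ l, ∑ j, (α l - Pi.single t 1 : Fin (k + 1) → ℕ) j < D :=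
    hD ▸ sum_sum_tsub_single_lt ht
  have hst : Ideal.Quotient.mk (Ideal.span {s t}) (s t) = 0 :=
    Ideal.Quotient.eq_zero_iff_mem.mpr (Ideal.mem_span_singleton_self _)
  -- Modulo `s t` only the coordinates with `α l t = 0` survive.
  have hquot := ih _ hdeg_quot (isWeakRegularSeq_quotient_succAbove hs t)
    (fun l => α l ∘ t.succAbove) (G := G')
    (a := fun l => Ideal.Quotient.mk (Ideal.span {s t}) (if α l t = 0 then a l else 0))
    (fun l hl => by
      by_cases h : α l t = 0
      · simp [h, haG l fun hG => hl ⟨hG, h⟩]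
      · simp [h])
    (by rw [sum_map_ite_mul_sMonomial_succAbove _ hst, ha, map_zero]) rfl
  rw [image2_sSyzygy_succAbove _ s α t fun l hl => hl.2] at hquot
  obtain ⟨b, hb, hab⟩ := exists_mem_span_sub_mem_of_mk_mem_span _ hquot
  obtain ⟨v, hv, hvG⟩ := exists_eq_pow_mul_of_sub_mem_span_singleton s α t haG
    (fun l hl => by_contra fun h => hl (apply_eq_zero_of_mem_span_sSyzygy s α hb h))
    (fun l hl => by simpa [hl] using hab l)
  have hvrel := sum_mul_sMonomial_tsub_single_eq_zero hs α t hv (by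
    simp [sub_mul, ha, sum_mul_sMonomial_eq_zero_of_mem_span_sSyzygy s α hb])
  have hsplit : a = (fun l => s t ^ (1 - α l t) * v l) + b := by
    ext l
    rw [Pi.add_apply, ← hv l, sub_add_cancel]
  rw [hsplit]
  exact add_mem (pow_mul_mem_span_sSyzygy s α t (ih _ hdeg_div hs _ hvG hvrel rfl))
    (span_mono (image2_subset (fun l hl => hl.1) (fun l hl => hl.1)) hb)

end SSyzygy

section TermSyzygy

variable {σ R : Type*} [CommRing R]

open Classical in
lemma sum_ite_le_monomial_coeff_tsub (p : MvPolynomial σ R) (u : σ →₀ ℕ)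
    {V : Finset (σ →₀ ℕ)} (hV : ∀ d ∈ p.support, d + u ∈ V) :
    ∑ v ∈ V, (if u ≤ v then monomial (v - u) (coeff (v - u) p) else 0) = p := by
  conv_rhs => rw [p.as_sum]
  symm
  refine Finset.sum_bij_ne_zero (fun d _ _ => d + u) (fun d hd _ => hV d hd)
    (fun _ _ _ _ _ _ h => add_right_cancel h) (fun v _ hv => ?_) (fun d _ _ => by simp)
  have hle : u ≤ v := by_contra fun h => hv (if_neg h)
  rw [if_pos hle] at hv
  have hc : coeff (v - u) p ≠ 0 := fun h => hv (by rw [h, map_zero])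
  exact ⟨v - u, mem_support_iff.mpr hc, by simpa using hc, tsub_add_cancel_of_le hle⟩

variable {k : ℕ} {ι κ : Type*}

noncomputable def sMonomialTerm [DecidableEq κ] (c : ι → Rˣ) (s : Fin k → R) (α : ι → Fin k → ℕ)
    (u : ι → σ →₀ ℕ) (kk : ι → κ) (l : ι) : κ → MvPolynomial σ R :=
  Pi.single (kk l) (monomial (u l) (↑(c l) * sMonomial s (α l)))

noncomputable def termSyzygy [DecidableEq ι] (c : ι → Rˣ) (s : Fin k → R) (α : ι → Fin k → ℕ)
    (u : ι → σ →₀ ℕ) (i j : ι) : ι → MvPolynomial σ R :=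
  Pi.single i (monomial (u i ⊔ u j - u i) (↑(c i)⁻¹ * sMonomial s (α i ⊔ α j - α i))) -
    Pi.single j (monomial (u i ⊔ u j - u j) (↑(c j)⁻¹ * sMonomial s (α i ⊔ α j - α j)))

def termSyzygies [DecidableEq ι] (c : ι → Rˣ) (s : Fin k → R) (α : ι → Fin k → ℕ)
    (u : ι → σ →₀ ℕ) (kk : ι → κ) : Set (ι → MvPolynomial σ R) :=
  {x | ∃ i j, kk i = kk j ∧ x = termSyzygy c s α u i j}

open Classical in
noncomputable def gradedCoeff (c : ι → Rˣ) (u : ι → σ →₀ ℕ) (kk : ι → κ)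
    (w : ι → MvPolynomial σ R) (v : σ →₀ ℕ) (q : κ) (l : ι) : R :=
  if kk l = q ∧ u l ≤ v then ↑(c l) * coeff (v - u l) (w l) else 0

variable (c : ι → Rˣ) (s : Fin k → R) (α : ι → Fin k → ℕ) (u : ι → σ →₀ ℕ) (kk : ι → κ)

lemma termSyzygy_self [DecidableEq ι] (i : ι) : termSyzygy c s α u i i = 0 :=
  sub_self _

lemma termSyzygy_swap [DecidableEq ι] (i j : ι) :
    termSyzygy c s α u i j = -termSyzygy c s α u j i := by
  rw [termSyzygy, termSyzygy, neg_sub, sup_comm (u j), sup_comm (α j)]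

lemma span_termSyzygies_eq_span_lt [DecidableEq ι] [LinearOrder ι] :
    span (MvPolynomial σ R) (termSyzygies c s α u kk) =
      span (MvPolynomial σ R) {x | ∃ i j, i < j ∧ kk i = kk j ∧ x = termSyzygy c s α u i j} := by
  refine le_antisymm (span_le.mpr ?_) (span_mono fun x ⟨i, j, _, hij, hx⟩ => ⟨i, j, hij, hx⟩)
  rintro _ ⟨i, j, hij, rfl⟩
  rcases lt_trichotomy i j with h | rfl | h
  · exact subset_span ⟨i, j, h, hij, rfl⟩
  · simp [termSyzygy_self]
  · rw [termSyzygy_swap]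
    exact neg_mem (subset_span ⟨j, i, h, hij.symm, rfl⟩)

lemma monomial_tsub_smul_sSyzygy [DecidableEq ι] {v : σ →₀ ℕ} {i j : ι} (hi : u i ≤ v)
    (hj : u j ≤ v) :
    (fun l => (↑(c l)⁻¹ : R) • monomial (v - u l) (sSyzygy s α i j l)) =
      monomial (v - u i ⊔ u j) (1 : R) • termSyzygy c s α u i j := by
  have hsup : u i ⊔ u j ≤ v := sup_le hi hj
  funext l
  by_cases hli : l = i <;> by_cases hlj : l = j <;> subst_vars <;>
    simp [sSyzygy, termSyzygy, smul_monomial, monomial_mul, tsub_add_tsub_cancel hsup, mul_comm, *]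

lemma monomial_smul_mem_span_termSyzygies [DecidableEq ι] {v : σ →₀ ℕ} {q : κ} {G : Set ι}
    (hG : ∀ l ∈ G, kk l = q ∧ u l ≤ v) {b : ι → R} (hb : b ∈ span R (image2 (sSyzygy s α) G G)) :
    (fun l => (↑(c l)⁻¹ : R) • monomial (v - u l) (b l)) ∈
      span (MvPolynomial σ R) (termSyzygies c s α u kk) := by
  let ψ : (ι → R) →ₗ[R] ι → MvPolynomial σ R :=
    LinearMap.pi fun l => (↑(c l)⁻¹ : R) • (monomial (v - u l)).comp (LinearMap.proj l)
  have hle : span R (image2 (sSyzygy s α) G G) ≤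
      ((span (MvPolynomial σ R) (termSyzygies c s α u kk)).restrictScalars R).comap ψ := by
    rw [span_le]
    rintro _ ⟨i, hi, j, hj, rfl⟩
    rw [SetLike.mem_coe, mem_comap, restrictScalars_mem]
    change (fun l => (↑(c l)⁻¹ : R) • monomial (v - u l) (sSyzygy s α i j l)) ∈ _
    rw [monomial_tsub_smul_sSyzygy c s α u (hG i hi).2 (hG j hj).2]
    exact smul_mem _ _ (subset_span ⟨i, j, (hG i hi).1.trans (hG j hj).1.symm, rfl⟩)
  exact hle hb

lemma sum_termSyzygy_smul_sMonomialTerm [Fintype ι] [DecidableEq ι] [DecidableEq κ] {i j : ι}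
    (hij : kk i = kk j) :
    ∑ l, termSyzygy c s α u i j l • sMonomialTerm c s α u kk l = 0 := by
  have key : ∀ i' ∈ ({i, j} : Set ι),
      monomial (u i ⊔ u j - u i') (↑(c i')⁻¹ * sMonomial s (α i ⊔ α j - α i')) *
        monomial (u i') (↑(c i') * sMonomial s (α i')) =
      (monomial (u i ⊔ u j) (sMonomial s (α i ⊔ α j)) : MvPolynomial σ R) := by
    rintro i' hi'
    have hu : u i' ≤ u i ⊔ u j := by rcases hi' with rfl | rfl <;> simp
    have hα : α i' ≤ α i ⊔ α j := by rcases hi' with rfl | rfl <;> simp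
    rw [monomial_mul, tsub_add_cancel_of_le hu, mul_mul_mul_comm, Units.inv_mul, one_mul,
      sMonomial_tsub_mul s hα]
  simp only [termSyzygy, sMonomialTerm, Pi.sub_apply, sub_smul, Finset.sum_sub_distrib,
    Pi.single_apply, ite_smul, zero_smul, Finset.sum_ite_eq', Finset.mem_univ, if_true,
    ← Pi.single_smul, smul_eq_mul]
  rw [key i (by simp), key j (by simp), hij, sub_self]

lemma sum_smul_sMonomialTerm_eq_zero_of_mem_span [Fintype ι] [DecidableEq ι] [DecidableEq κ]
    {w : ι → MvPolynomial σ R}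
    (hw : w ∈ span (MvPolynomial σ R) (termSyzygies c s α u kk)) :
    ∑ l, w l • sMonomialTerm c s α u kk l = 0 := by
  have hle : span (MvPolynomial σ R) (termSyzygies c s α u kk) ≤
      LinearMap.ker (Fintype.linearCombination (MvPolynomial σ R) (sMonomialTerm c s α u kk)) := by
    rw [span_le]
    rintro _ ⟨i, j, hij, rfl⟩
    rw [SetLike.mem_coe, LinearMap.mem_ker, Fintype.linearCombination_apply]
    exact sum_termSyzygy_smul_sMonomialTerm c s α u kk hij
  have h := hle hw
  rwa [LinearMap.mem_ker, Fintype.linearCombination_apply] at h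

lemma sum_gradedCoeff_mul_sMonomial [Fintype ι] [DecidableEq κ] (w : ι → MvPolynomial σ R)
    (v : σ →₀ ℕ) (q : κ) :
    ∑ l, gradedCoeff c u kk w v q l * sMonomial s (α l) =
      coeff v ((∑ l, w l • sMonomialTerm c s α u kk l) q) := by
  rw [Finset.sum_apply, coeff_sum]
  refine Finset.sum_congr rfl fun l _ => ?_
  by_cases hq : kk l = q
  · subst hq
    rw [Pi.smul_apply, sMonomialTerm, Pi.single_eq_same, smul_eq_mul, coeff_mul_monomial']
    simp only [gradedCoeff, true_and]
    split_ifs <;> ring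
  · simp [gradedCoeff, sMonomialTerm, hq, Ne.symm hq]

lemma sum_sum_monomial_gradedCoeff [Fintype κ] (w : ι → MvPolynomial σ R)
    {V : Finset (σ →₀ ℕ)} (hV : ∀ l, ∀ d ∈ (w l).support, d + u l ∈ V) :
    ∑ q, ∑ v ∈ V, (fun l => (↑(c l)⁻¹ : R) • monomial (v - u l) (gradedCoeff c u kk w v q l)) =
      w := by
  classical
  funext l
  have hterm : ∀ q v, (↑(c l)⁻¹ : R) • monomial (v - u l) (gradedCoeff c u kk w v q l) =
      if kk l = q then if u l ≤ v then monomial (v - u l) (coeff (v - u l) (w l)) else 0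
      else 0 := by
    intro q v
    simp only [gradedCoeff]
    split_ifs <;> simp_all [smul_monomial]
  simp only [Finset.sum_apply, hterm]
  rw [Finset.sum_comm]
  simp only [Finset.sum_ite_eq, Finset.mem_univ, if_true]
  exact sum_ite_le_monomial_coeff_tsub _ _ (hV l)

lemma mem_span_termSyzygies_of_sum_smul_eq_zero [Fintype ι] [DecidableEq ι] [Fintype κ]
    [DecidableEq κ]
    (hs : ∀ τ : Equiv.Perm (Fin k), IsWeakRegularSeq (s ∘ τ)) {w : ι → MvPolynomial σ R}
    (hw : ∑ l, w l • sMonomialTerm c s α u kk l = 0) :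
    w ∈ span (MvPolynomial σ R) (termSyzygies c s α u kk) := by
  classical
  let V := Finset.univ.biUnion fun l => (w l).support.image (· + u l)
  rw [← sum_sum_monomial_gradedCoeff c u kk w (V := V)
    fun l d hd => Finset.mem_biUnion.2 ⟨l, Finset.mem_univ _, Finset.mem_image_of_mem _ hd⟩]
  refine sum_mem fun q _ => sum_mem fun v _ => monomial_smul_mem_span_termSyzygies c s α u kk
    (G := {l | kk l = q ∧ u l ≤ v}) (fun _ => id) ?_
  refine mem_span_sSyzygy_of_sum_mul_sMonomial_eq_zero hs α (fun l hl => if_neg hl) ?_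
  rw [sum_gradedCoeff_mul_sMonomial, hw, Pi.zero_apply, coeff_zero]

end TermSyzygy

/-- the syzygies of terms of `s`-monomial type in `F = S^r` are generated
by the elements `r_{ij}`. -/
theorem syzygies_of_sMonomialType_terms
    {n : ℕ} {R : Type*} [CommRing R]
    {k : ℕ} (s : Fin k → R) (hs : IsPermutableWeakRegularSeq s)
    {r M : ℕ} (c : Fin M → Rˣ) (α : Fin M → Fin k → ℕ)
    (u : Fin M → (Fin n →₀ ℕ)) (kk : Fin M → Fin r)
    (f : Fin M → (Fin r → MvPolynomial (Fin n) R))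
    (hf : ∀ l, f l = Pi.single (kk l)
      (MvPolynomial.monomial (u l) (↑(c l) * ∏ t, s t ^ α l t)))
    (rr : Fin M → Fin M → (Fin M → MvPolynomial (Fin n) R))
    (hrr : ∀ i j, rr i j =
      Pi.single i (MvPolynomial.monomial ((u i ⊔ u j) - u i)
        (↑(c i)⁻¹ * ∏ t, s t ^ (max (α i t) (α j t) - α i t)))
      - Pi.single j (MvPolynomial.monomial ((u i ⊔ u j) - u j)
        (↑(c j)⁻¹ * ∏ t, s t ^ (max (α i t) (α j t) - α j t))))
    (w : Fin M → MvPolynomial (Fin n) R) :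
    (∑ l, w l • f l = 0) ↔
      w ∈ Submodule.span (MvPolynomial (Fin n) R)
        {v | ∃ i j : Fin M, i < j ∧ kk i = kk j ∧ v = rr i j} := by
  obtain rfl : f = sMonomialTerm c s α u kk := funext hf
  obtain rfl : rr = termSyzygy c s α u := funext₂ hrr
  rw [← span_termSyzygies_eq_span_lt]
  exact ⟨mem_span_termSyzygies_of_sum_smul_eq_zero c s α u kk hs.2,
    sum_smul_sMonomialTerm_eq_zero_of_mem_span c s α u kk⟩
end

section
/- Let R be a principal ideal domain, S = R[x_1,…,x_n] with a fixed monomial order, and let G = {f_1,…,f_m} be a Gröbner basis of the ideal I it generates. For each 1 ≤ i < j ≤ m, write u_{ij} = (l_{ij}/lc(f_i))·x^{sup(deg f_i, deg f_j)−deg f_i} where l_{ij} is a chosen least common multiple of lc(f_i) and lc(f_j), and choose q_{ij,1},…,q_{ij,m} ∈ S with S_R(f_i,f_j) = u_{ij}f_i − u_{ji}f_j = q_{ij,1}f_1+⋯+q_{ij,m}f_m such that deg(q_{ij,l}) + deg(f_l) ≼ deg(S_R(f_i,f_j)) whenever q_{ij,l}f_l ≠ 0 (taking all q_{ij,l} =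 0 when S_R(f_i,f_j) = 0). Let φ : S^m → S be the S-linear map sending the standard basis vector g_l to f_l. Then the kernel of φ is generated by the elements r_{ij} = u_{ij}g_i − u_{ji}g_j − q_{ij,1}g_1 − ⋯ − q_{ij,m}g_m for 1 ≤ i < j ≤ m. -/
open MvPolynomial
open scoped MonomialOrder

open PaperGB

/-- `l` is a least common multiple of `a` and `b`, with cofactors `qa`, `qb`. -/
def IsLcmChoice {R : Type*} [CommRing R] (a b l qa qb : R) : Prop :=
  l = a * qa ∧ l = b * qb ∧ ∀ c, a ∣ c → b ∣ c → l ∣ c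

/-- The `S_R`-polynomial of `f i` and `f j`, built from cofactor data `u i j`, `v i j`
(so that `lcm (lc (f i)) (lc (f j)) = lc (f i) * u i j = lc (f j) * v i j`). -/
noncomputable def sPolyPID {n : ℕ} {R : Type*} [CommRing R] (m : MonomialOrder (Fin n))
    {M : ℕ} (f : Fin M → MvPolynomial (Fin n) R) (u v : Fin M → Fin M → R) (i j : Fin M) :
    MvPolynomial (Fin n) R :=
  MvPolynomial.monomial ((mDeg m (f i) ⊔ mDeg m (f j)) - mDeg m (f i)) (u i j) * f i
  - MvPolynomial.monomial ((mDeg m (f i) ⊔ mDeg m (f j)) - mDeg m (f j)) (v i j) * f j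

/-!
Schreyer's argument, over a PID. Measure a syzygy `w` of `f` by its weighted degree: the largest
`e + deg fₜ` over the terms `xᵉ` of the coordinates `wₜ`. If this is `δ`, then the coefficients
of the `wₜ` at `δ - deg fₜ` form a syzygy of the leading coefficients `lc fₜ` with `deg fₜ ≤ δ`,
as the coefficient of `xᵟ` in `∑ wₜ fₜ` vanishes. Over a PID such constant syzygies are
generated by the lcm syzygies `uᵢⱼ eᵢ - vᵢⱼ eⱼ`, because the ideal lattice of a PID is
distributive: `(c₁, …, cₖ₋₁) ∩ (cₖ) = ∑ᵢ (cᵢ) ∩ (cₖ) = ∑ᵢ (lcm(cᵢ, cₖ))`. Lifted to weighted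
degree `δ`, an lcm syzygy is a monomial multiple of `r_{ij}` up to the standard representation
`q_{ij}`, which is strictly below `δ` because `deg S(fᵢ, fⱼ) ≺ sup(deg fᵢ, deg fⱼ)`. Subtracting
the matching combination of the `r_{ij}` lowers the weighted degree, and monomial orders are
well-orders.
-/

namespace Ideal

variable {R : Type*} [CommSemiring R]

theorem sup_inf_le_of_isPrincipal {I J : Ideal R} (hIJ : (I ⊔ J).IsPrincipal) (K : Ideal R) :
    (I ⊔ J) ⊓ K ≤ I ⊓ K ⊔ J ⊓ K := by
  obtain ⟨d, hd⟩ := hIJ.principal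
  rintro x ⟨hxd, hxK⟩
  have hd' : I ⊔ J = span {d} := hd
  rw [SetLike.mem_coe, hd', mem_span_singleton'] at hxd
  obtain ⟨y, rfl⟩ := hxd
  obtain ⟨i, hi, j, hj, hij⟩ := Submodule.mem_sup.mp (hd' ▸ mem_span_singleton_self d)
  -- `i, j ∈ (d)`, so `y * i` and `y * j` are multiples of `y * d ∈ K`.
  have hK : ∀ z ∈ I ⊔ J, y * z ∈ K := fun z hz => by
    obtain ⟨z', rfl⟩ := mem_span_singleton'.mp (hd' ▸ hz)
    simpa only [mul_left_comm] using K.mul_mem_left z' hxK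
  rw [← hij, mul_add]
  exact Submodule.add_mem_sup ⟨I.mul_mem_left y hi, hK i (Submodule.mem_sup_left hi)⟩
    ⟨J.mul_mem_left y hj, hK j (Submodule.mem_sup_right hj)⟩

theorem iSup_inf_le_iSup_inf [IsPrincipalIdealRing R] {ι : Type*} (I : ι → Ideal R)
    (s : Finset ι) (K : Ideal R) : (⨆ t ∈ s, I t) ⊓ K ≤ ⨆ t ∈ s, I t ⊓ K := by
  classical
  induction s using Finset.induction_on with
  | empty => simp
  | insert a s _ ih =>
    rw [Finset.iSup_insert, Finset.iSup_insert]
    exact (sup_inf_le_of_isPrincipal (IsPrincipalIdealRing.principal _) K).trans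
      (sup_le_sup_left ih _)

end Ideal

section LcmSyzygies

variable {R ι : Type*} [CommRing R]

namespace IsLcmChoice

theorem span_inf_span {a b l qa qb : R} (h : IsLcmChoice a b l qa qb) :
    Ideal.span {a} ⊓ Ideal.span {b} = Ideal.span {l} := by
  ext x
  simp only [Submodule.mem_inf, Ideal.mem_span_singleton]
  refine ⟨fun ⟨ha, hb⟩ => h.2.2 x ha hb, fun hl => ⟨?_, ?_⟩⟩
  · exact (Dvd.intro qa h.1.symm).trans hl
  · exact (Dvd.intro qb h.2.1.symm).trans hl

theorem exists_eq_sum_mul_of_mul_mem_iSup [IsDomain R] [IsPrincipalIdealRing R]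
    {c l qc qb : ι → R} {b : R} (hb : b ≠ 0) {s : Finset ι}
    (hl : ∀ t ∈ s, IsLcmChoice (c t) b (l t) (qc t) (qb t)) {y : R}
    (hy : b * y ∈ ⨆ t ∈ s, Ideal.span {c t}) : ∃ ρ : ι → R, y = ∑ t ∈ s, ρ t * qb t := by
  have hmem : b * y ∈ ⨆ t ∈ s, Ideal.span {l t} :=
    (Ideal.iSup_inf_le_iSup_inf _ s _).trans (iSup₂_mono fun t ht => (hl t ht).span_inf_span.le)
      ⟨hy, Ideal.mem_span_singleton'.mpr ⟨y, mul_comm _ _⟩⟩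
  obtain ⟨μ, hμ⟩ := (Submodule.mem_iSup_finset_iff_exists_sum _ _).mp hmem
  choose ρ hρ using fun t => Ideal.mem_span_singleton'.mp (μ t).2
  refine ⟨ρ, mul_left_cancel₀ hb ?_⟩
  rw [← hμ, Finset.mul_sum]
  refine Finset.sum_congr rfl fun t ht => ?_
  rw [← hρ, (hl t ht).2.1]
  ring

theorem linearCombination_single_sub_single_eq_zero [Fintype ι] [DecidableEq ι] {c : ι → R}
    {i j : ι} {l qi qj : R} (h : IsLcmChoice (c i) (c j) l qi qj) :
    Fintype.linearCombination R c (Pi.single i qi - Pi.single j qj) = 0 := by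
  simp only [map_sub, Fintype.linearCombination_apply_single, smul_eq_mul]
  rw [mul_comm, ← h.1, mul_comm, ← h.2.1, sub_self]

end IsLcmChoice

variable [LinearOrder ι]

def lcmSyzygies (u v : ι → ι → R) (s : Finset ι) : Set (ι → R) :=
  {k | ∃ i ∈ s, ∃ j ∈ s, i < j ∧ k = Pi.single i (u i j) - Pi.single j (v i j)}

theorem lcmSyzygies_mono (u v : ι → ι → R) {s s' : Finset ι} (h : s ⊆ s') :
    lcmSyzygies u v s ⊆ lcmSyzygies u v s' := by
  rintro _ ⟨i, hi, j, hj, hij, rfl⟩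
  exact ⟨i, h hi, j, h hj, hij, rfl⟩

theorem mem_span_lcmSyzygies [IsDomain R] [IsPrincipalIdealRing R] [Fintype ι] {c : ι → R}
    (hc : ∀ t, c t ≠ 0) {l u v : ι → ι → R}
    (hl : ∀ i j, i < j → IsLcmChoice (c i) (c j) (l i j) (u i j) (v i j))
    (s : Finset ι) {h : ι → R} (hs : ∀ t ∉ s, h t = 0)
    (hh : h ∈ LinearMap.ker (Fintype.linearCombination R c)) :
    h ∈ Submodule.span R (lcmSyzygies u v s) := by
  induction s using Finset.induction_on_max generalizing h with
  | empty => simp [show h = 0 from funext fun t => hs t (Finset.notMem_empty t)]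
  | insert a s hlt ih =>
    have has : a ∉ s := fun ha => lt_irrefl a (hlt a ha)
    have hsum : c a * h a = -∑ t ∈ s, h t * c t := by
      rw [eq_neg_iff_add_eq_zero, mul_comm, ← Finset.sum_insert (f := fun t => h t * c t) has,
        Finset.sum_subset (Finset.subset_univ _) fun t _ ht => by rw [hs t ht, zero_mul]]
      simpa [Fintype.linearCombination_apply] using hh
    obtain ⟨ρ, hρ⟩ := IsLcmChoice.exists_eq_sum_mul_of_mul_mem_iSup (y := h a) (hc a)
      (fun t ht => hl t a (hlt t ht)) (hsum ▸ neg_mem (Submodule.sum_mem _ fun t ht =>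
        Submodule.mem_iSup_of_mem t (Submodule.mem_iSup_of_mem ht
          (Ideal.mul_mem_left _ _ (Ideal.mem_span_singleton_self _)))))
    set σ : ι → ι → R := fun t => Pi.single t (u t a) - Pi.single a (v t a)
    have hσ : ∀ t ∈ s, σ t ∈ lcmSyzygies u v (insert a s) := fun t ht =>
      ⟨t, Finset.mem_insert_of_mem ht, a, Finset.mem_insert_self a s, hlt t ht, rfl⟩
    -- `k` is `h` with its `a`-th coordinate cleared by the lcm syzygies `σ t`
    set k := h + ∑ t ∈ s, ρ t • σ t
    have hk : k ∈ Submodule.span R (lcmSyzygies u v s) := by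
      refine ih (fun x hx => ?_) (add_mem hh (Submodule.sum_mem _ fun t ht =>
        Submodule.smul_mem _ _ (hl t a (hlt t ht)).linearCombination_single_sub_single_eq_zero))
      have hkx : k x = h x - ∑ t ∈ s, ρ t * (Pi.single a (v t a) : ι → R) x := by
        simp only [k, σ, Pi.add_apply, Finset.sum_apply, Pi.smul_apply, Pi.sub_apply,
          smul_eq_mul]
        rw [sub_eq_add_neg, ← Finset.sum_neg_distrib]
        refine congrArg _ (Finset.sum_congr rfl fun t ht => ?_)
        rw [Pi.single_eq_of_ne (fun hxt : x = t => hx (hxt ▸ ht))]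
        ring
      by_cases hxa : x = a
      · subst hxa
        simp [hkx, hρ]
      · simp [hkx, Pi.single_eq_of_ne hxa, hs x (by simp [hxa, hx])]
    rw [show h = k - ∑ t ∈ s, ρ t • σ t by simp [k]]
    exact sub_mem (Submodule.span_mono (lcmSyzygies_mono u v (Finset.subset_insert a s)) hk)
      (Submodule.sum_mem _ fun t ht => Submodule.smul_mem _ _ (Submodule.subset_span (hσ t ht)))

end LcmSyzygies

namespace MonomialOrder

variable {σ R ι : Type*} {m : MonomialOrder σ} [CommRing R]

section WeightedDegree

variable (m) in
noncomputable def weightedDegree [Fintype ι] (f y : ι → MvPolynomial σ R) : WithBot m.syn :=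
  Finset.univ.sup fun t =>
    (y t).support.sup fun e => (m.toSyn (e + m.degree (f t)) : WithBot m.syn)

variable (m) in
noncomputable def weightedBelow (f : ι → MvPolynomial σ R) (δ : σ →₀ ℕ) :
    Submodule R (ι → MvPolynomial σ R) :=
  Submodule.pi Set.univ fun t => restrictSupport R {e | e + m.degree (f t) ≺[m] δ}

variable {f y : ι → MvPolynomial σ R} {δ : σ →₀ ℕ}

theorem mem_weightedBelow :
    y ∈ m.weightedBelow f δ ↔ ∀ t, ∀ e ∈ (y t).support, e + m.degree (f t) ≺[m] δ := by
  simp [weightedBelow, Submodule.mem_pi, mem_restrictSupport_iff, Set.subset_def]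

theorem monomial_smul_mem_weightedBelow (hy : y ∈ m.weightedBelow f δ) (a : σ →₀ ℕ) (c : R) :
    monomial a c • y ∈ m.weightedBelow f (a + δ) := by
  classical
  rw [mem_weightedBelow] at hy ⊢
  intro t e he
  rw [Pi.smul_apply, smul_eq_mul, mem_support_iff, coeff_monomial_mul'] at he
  split_ifs at he with hae
  · have := hy t (e - a) (mem_support_iff.mpr (right_ne_zero_of_mul he))
    rw [← tsub_add_cancel_of_le hae, add_comm (e - a), add_assoc, map_add, map_add m.toSyn a]
    exact (add_lt_add_iff_left _).mpr this
  · exact absurd rfl he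

variable [Fintype ι]

theorem weightedDegree_le_iff :
    m.weightedDegree f y ≤ m.toSyn δ ↔ ∀ t, ∀ e ∈ (y t).support, e + m.degree (f t) ≼[m] δ := by
  simp only [weightedDegree, Finset.sup_le_iff, Finset.mem_univ, true_imp_iff, WithBot.coe_le_coe]

theorem weightedDegree_lt_iff : m.weightedDegree f y < m.toSyn δ ↔ y ∈ m.weightedBelow f δ := by
  have hδ : (⊥ : WithBot m.syn) < m.toSyn δ := WithBot.bot_lt_coe _
  simp only [weightedDegree, mem_weightedBelow, Finset.sup_lt_iff hδ, Finset.mem_univ,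
    true_imp_iff, WithBot.coe_lt_coe]

theorem weightedDegree_eq_bot_iff : m.weightedDegree f y = ⊥ ↔ y = 0 := by
  simp only [weightedDegree, Finset.sup_eq_bot_iff, Finset.mem_univ, true_imp_iff,
    WithBot.coe_ne_bot, imp_false, ← Finset.eq_empty_iff_forall_notMem, support_eq_empty,
    funext_iff, Pi.zero_apply]

end WeightedDegree

section TopCoefficients

variable (m) in
noncomputable def weightedCoeff (f y : ι → MvPolynomial σ R) (δ : σ →₀ ℕ) (t : ι) : R :=
  if m.degree (f t) ≤ δ then (y t).coeff (δ - m.degree (f t)) else 0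

variable (m) in
noncomputable def weightedMonomial (f : ι → MvPolynomial σ R) (δ : σ →₀ ℕ) :
    (ι → R) →ₗ[R] ι → MvPolynomial σ R :=
  LinearMap.pi fun t => monomial (δ - m.degree (f t)) ∘ₗ LinearMap.proj t

theorem weightedMonomial_apply (f : ι → MvPolynomial σ R) (δ : σ →₀ ℕ) (h : ι → R) (t : ι) :
    m.weightedMonomial f δ h t = monomial (δ - m.degree (f t)) (h t) :=
  rfl

theorem coeff_mul_of_forall_add_degree_le {p g : MvPolynomial σ R} {δ : σ →₀ ℕ}
    (hp : ∀ e ∈ p.support, e + m.degree g ≼[m] δ) :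
    (p * g).coeff δ =
      (if m.degree g ≤ δ then p.coeff (δ - m.degree g) else 0) * m.leadingCoeff g := by
  split_ifs with hg
  · conv_lhs => rw [← tsub_add_cancel_of_le hg]
    refine coeff_mul_of_add_of_degree_le (degree_le_iff.mpr fun e he => ?_) le_rfl
    have := hp e he
    rwa [← tsub_add_cancel_of_le hg, map_add, map_add, add_le_add_iff_right] at this
  · rw [zero_mul]
    by_cases hp0 : p = 0
    · rw [hp0, zero_mul, coeff_zero]
    have hlt : m.degree p + m.degree g ≺[m] δ :=
      lt_of_le_of_ne (hp _ (m.degree_mem_support hp0))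
        fun h => hg (m.toSyn.injective h ▸ le_add_self)
    exact m.coeff_eq_zero_of_lt (lt_of_le_of_lt degree_mul_le hlt)

variable [Fintype ι] {f y : ι → MvPolynomial σ R} {δ : σ →₀ ℕ}

theorem coeff_linearCombination_of_weightedDegree_le (hy : m.weightedDegree f y ≤ m.toSyn δ) :
    (Fintype.linearCombination _ f y).coeff δ =
      Fintype.linearCombination R (fun t => m.leadingCoeff (f t)) (m.weightedCoeff f y δ) := by
  simp only [Fintype.linearCombination_apply, smul_eq_mul, coeff_sum]
  exact Finset.sum_congr rfl fun t _ =>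
    coeff_mul_of_forall_add_degree_le (weightedDegree_le_iff.mp hy t)

theorem sub_weightedMonomial_weightedCoeff_mem (hy : m.weightedDegree f y ≤ m.toSyn δ) :
    y - m.weightedMonomial f δ (m.weightedCoeff f y δ) ∈ m.weightedBelow f δ := by
  classical
  rw [mem_weightedBelow]
  intro t e he
  simp only [Pi.sub_apply, weightedMonomial_apply, weightedCoeff] at he
  have hne : e + m.degree (f t) ≠ δ := by
    intro heq
    have hle : m.degree (f t) ≤ δ := heq ▸ le_add_self
    apply mem_support_iff.mp he
    rw [coeff_sub, coeff_monomial, if_pos hle, if_pos (eq_tsub_of_add_eq heq).symm,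
      eq_tsub_of_add_eq heq, sub_self]
  refine lt_of_le_of_ne ?_ fun h => hne (m.toSyn.injective h)
  rcases Finset.mem_union.mp (support_sub _ _ _ he) with h | h
  · exact weightedDegree_le_iff.mp hy t e h
  · have hle : m.degree (f t) ≤ δ := by
      by_contra hle
      simp [hle] at h
    rw [Finset.mem_singleton.mp (support_monomial_subset h), tsub_add_cancel_of_le hle]

end TopCoefficients

section Lifting

variable [LinearOrder ι] {f : ι → MvPolynomial σ R} {u v : ι → ι → R}
  {r : ι → ι → ι → MvPolynomial σ R}

variable (m) in
noncomputable def liftedLcmSyzygy (f : ι → MvPolynomial σ R) (u v : ι → ι → R) (i j : ι) :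
    ι → MvPolynomial σ R :=
  Pi.single i (monomial (m.degree (f i) ⊔ m.degree (f j) - m.degree (f i)) (u i j)) -
    Pi.single j (monomial (m.degree (f i) ⊔ m.degree (f j) - m.degree (f j)) (v i j))

theorem weightedMonomial_lcmSyzygy {i j : ι} {δ : σ →₀ ℕ}
    (hδ : m.degree (f i) ⊔ m.degree (f j) ≤ δ) :
    m.weightedMonomial f δ (Pi.single i (u i j) - Pi.single j (v i j)) =
      monomial (δ - (m.degree (f i) ⊔ m.degree (f j))) (1 : R) • m.liftedLcmSyzygy f u v i j := by
  have hmul : ∀ {d : σ →₀ ℕ} (a : R), d ≤ m.degree (f i) ⊔ m.degree (f j) →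
      monomial (δ - d) a = monomial (δ - (m.degree (f i) ⊔ m.degree (f j))) 1 *
        monomial (m.degree (f i) ⊔ m.degree (f j) - d) a := fun a hd => by
    rw [monomial_mul, one_mul, tsub_add_tsub_cancel hδ hd]
  funext t
  simp only [weightedMonomial_apply, liftedLcmSyzygy, Pi.sub_apply, Pi.smul_apply, smul_eq_mul,
    map_sub, mul_sub]
  congr 1
  · by_cases hti : t = i
    · subst hti; simp only [Pi.single_eq_same, hmul _ le_sup_left]
    · simp only [Pi.single_eq_of_ne hti, map_zero, mul_zero]
  · by_cases htj : t = j
    · subst htj; simp only [Pi.single_eq_same, hmul _ le_sup_right]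
    · simp only [Pi.single_eq_of_ne htj, map_zero, mul_zero]

theorem weightedMonomial_mem_span_sup_weightedBelow
    (hr : ∀ i j, i < j → m.liftedLcmSyzygy f u v i j - r i j ∈
      m.weightedBelow f (m.degree (f i) ⊔ m.degree (f j)))
    {δ : σ →₀ ℕ} {s : Finset ι} (hs : ∀ t ∈ s, m.degree (f t) ≤ δ) {h : ι → R}
    (hh : h ∈ Submodule.span R (lcmSyzygies u v s)) :
    m.weightedMonomial f δ h ∈
      (Submodule.span (MvPolynomial σ R) {k | ∃ i j, i < j ∧ k = r i j}).restrictScalars R ⊔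
        m.weightedBelow f δ := by
  refine Submodule.mem_comap.mp
    ((Submodule.span_le (p := Submodule.comap (m.weightedMonomial f δ) _)).mpr ?_ hh)
  rintro _ ⟨i, hi, j, hj, hij, rfl⟩
  have hδ := sup_le (hs i hi) (hs j hj)
  rw [SetLike.mem_coe, Submodule.mem_comap, weightedMonomial_lcmSyzygy hδ,
    ← sub_add_cancel (m.liftedLcmSyzygy f u v i j) (r i j), smul_add, add_comm]
  refine Submodule.add_mem_sup ?_ ?_
  · exact (Submodule.restrictScalars_mem _ _ _).mpr
      (Submodule.smul_mem _ _ (Submodule.subset_span ⟨i, j, hij, rfl⟩))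
  · have := monomial_smul_mem_weightedBelow (hr i j hij)
      (δ - (m.degree (f i) ⊔ m.degree (f j))) 1
    rwa [tsub_add_cancel_of_le hδ] at this

variable [IsDomain R] [IsPrincipalIdealRing R] [Fintype ι] {l : ι → ι → R}

theorem exists_mem_span_sub_mem_weightedBelow (hf : ∀ t, f t ≠ 0)
    (hl : ∀ i j, i < j → IsLcmChoice (m.leadingCoeff (f i)) (m.leadingCoeff (f j))
      (l i j) (u i j) (v i j))
    (hr : ∀ i j, i < j → m.liftedLcmSyzygy f u v i j - r i j ∈
      m.weightedBelow f (m.degree (f i) ⊔ m.degree (f j)))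
    {w : ι → MvPolynomial σ R} (hw : w ∈ LinearMap.ker (Fintype.linearCombination _ f))
    {δ : σ →₀ ℕ} (hδ : m.weightedDegree f w ≤ m.toSyn δ) :
    ∃ z ∈ Submodule.span (MvPolynomial σ R) {k | ∃ i j, i < j ∧ k = r i j},
      w - z ∈ m.weightedBelow f δ := by
  classical
  set s := Finset.univ.filter fun t => m.degree (f t) ≤ δ
  have hsyz : m.weightedCoeff f w δ ∈
      LinearMap.ker (Fintype.linearCombination R fun t => m.leadingCoeff (f t)) := by
    rw [LinearMap.mem_ker, ← coeff_linearCombination_of_weightedDegree_le hδ,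
      LinearMap.mem_ker.mp hw, coeff_zero]
  have hspan := mem_span_lcmSyzygies (h := m.weightedCoeff f w δ)
    (fun t => m.leadingCoeff_ne_zero_iff.mpr (hf t)) hl s
    (fun t ht => if_neg (by simpa [s] using ht)) hsyz
  obtain ⟨z, hz, b, hb, hzb⟩ := Submodule.mem_sup.mp
    (weightedMonomial_mem_span_sup_weightedBelow hr (fun t ht => (Finset.mem_filter.mp ht).2)
      hspan)
  refine ⟨z, hz, ?_⟩
  rw [show w - z = (w - m.weightedMonomial f δ (m.weightedCoeff f w δ)) + b by
    rw [← hzb]; abel]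
  exact add_mem (sub_weightedMonomial_weightedCoeff_mem hδ) hb

theorem ker_linearCombination_eq_span (hf : ∀ t, f t ≠ 0)
    (hl : ∀ i j, i < j → IsLcmChoice (m.leadingCoeff (f i)) (m.leadingCoeff (f j))
      (l i j) (u i j) (v i j))
    (hr_ker : ∀ i j, i < j → r i j ∈ LinearMap.ker (Fintype.linearCombination _ f))
    (hr : ∀ i j, i < j → m.liftedLcmSyzygy f u v i j - r i j ∈
      m.weightedBelow f (m.degree (f i) ⊔ m.degree (f j))) :
    LinearMap.ker (Fintype.linearCombination _ f) =
      Submodule.span (MvPolynomial σ R) {k | ∃ i j, i < j ∧ k = r i j} := by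
  have hle : Submodule.span (MvPolynomial σ R) {k | ∃ i j, i < j ∧ k = r i j} ≤
      LinearMap.ker (Fintype.linearCombination _ f) :=
    Submodule.span_le.mpr fun _ ⟨i, j, hij, hk⟩ => hk ▸ hr_ker i j hij
  refine le_antisymm (fun w hw => ?_) hle
  induction hd : m.weightedDegree f w using WellFoundedLT.induction generalizing w with
  | ind d ih =>
  cases d with
  | bot => simp [weightedDegree_eq_bot_iff.mp hd]
  | coe δ =>
    obtain ⟨δ, rfl⟩ := m.toSyn.surjective δ
    obtain ⟨z, hz, hwz⟩ := exists_mem_span_sub_mem_weightedBelow hf hl hr hw hd.le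
    have := ih _ (hd ▸ weightedDegree_lt_iff.mpr hwz) (w - z) (sub_mem hw (hle hz)) rfl
    simpa using add_mem this hz

end Lifting

theorem lt_of_mem_support_monomial_mul_sub_monomial_mul {g₁ g₂ : MvPolynomial σ R}
    {s : σ →₀ ℕ} (h₁ : m.degree g₁ ≤ s) (h₂ : m.degree g₂ ≤ s) {a₁ a₂ : R}
    (ha : a₁ * m.leadingCoeff g₁ = a₂ * m.leadingCoeff g₂) {e : σ →₀ ℕ}
    (he : e ∈ (monomial (s - m.degree g₁) a₁ * g₁ - monomial (s - m.degree g₂) a₂ * g₂).support) :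
    e ≺[m] s := by
  classical
  have hdeg : ∀ {g : MvPolynomial σ R} (a : R), m.degree g ≤ s →
      m.degree (monomial (s - m.degree g) a * g) ≼[m] s := fun a hg => by
    refine m.degree_mul_le.trans ?_
    rw [map_add, ← tsub_add_cancel_of_le hg, map_add m.toSyn (s - _), tsub_add_cancel_of_le hg]
    exact add_le_add_left (m.degree_monomial_le a) _
  have hcoeff : ∀ {g : MvPolynomial σ R} (a : R), m.degree g ≤ s →
      (monomial (s - m.degree g) a * g).coeff s = a * m.leadingCoeff g := fun a hg => by
    rw [coeff_monomial_mul', if_pos tsub_le_self, tsub_tsub_cancel_of_le hg]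
    rfl
  refine lt_of_le_of_ne ?_ fun h => ?_
  · rcases Finset.mem_union.mp (support_sub _ _ _ he) with h | h
    · exact (m.le_degree h).trans (hdeg a₁ h₁)
    · exact (m.le_degree h).trans (hdeg a₂ h₂)
  · rw [m.toSyn.injective h, mem_support_iff, coeff_sub, hcoeff a₁ h₁, hcoeff a₂ h₂, ha,
      sub_self] at he
    exact he rfl

end MonomialOrder

theorem linearCombination_liftedLcmSyzygy {n : ℕ} {R : Type*} [CommRing R]
    (m : MonomialOrder (Fin n)) {M : ℕ} (f : Fin M → MvPolynomial (Fin n) R)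
    (u v : Fin M → Fin M → R) (i j : Fin M) :
    Fintype.linearCombination _ f (m.liftedLcmSyzygy f u v i j) = sPolyPID m f u v i j := by
  simp only [MonomialOrder.liftedLcmSyzygy, map_sub, Fintype.linearCombination_apply_single,
    smul_eq_mul, sPolyPID]
  rfl

theorem mem_weightedBelow_of_degree_le_sPolyPID {n : ℕ} {R : Type*} [CommRing R] [IsDomain R]
    {m : MonomialOrder (Fin n)} {M : ℕ} {f : Fin M → MvPolynomial (Fin n) R} (hf : ∀ t, f t ≠ 0)
    {u v : Fin M → Fin M → R} {i j : Fin M}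
    (huv : u i j * mLC m (f i) = v i j * mLC m (f j)) {q : Fin M → MvPolynomial (Fin n) R}
    (hq : ∀ t, q t * f t ≠ 0 → mDeg m (q t) + mDeg m (f t) ≼[m] mDeg m (sPolyPID m f u v i j))
    (hq₀ : sPolyPID m f u v i j = 0 → q = 0) :
    q ∈ m.weightedBelow f (mDeg m (f i) ⊔ mDeg m (f j)) := by
  refine MonomialOrder.mem_weightedBelow.mpr fun t e he => ?_
  have hqt : q t ≠ 0 := by rintro h; simp [h] at he
  have hS : sPolyPID m f u v i j ≠ 0 := fun h => hqt (by rw [hq₀ h, Pi.zero_apply])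
  calc m.toSyn (e + m.degree (f t)) ≤ m.toSyn (m.degree (q t) + m.degree (f t)) := by
        rw [map_add, map_add]
        exact add_le_add_left (m.le_degree he) _
    _ ≤ m.toSyn (m.degree (sPolyPID m f u v i j)) := hq t (mul_ne_zero hqt (hf t))
    _ < m.toSyn (mDeg m (f i) ⊔ mDeg m (f j)) :=
        MonomialOrder.lt_of_mem_support_monomial_mul_sub_monomial_mul le_sup_left le_sup_right
          huv (m.degree_mem_support hS)

/-- over a PID, the relations `r_{ij}` arising from the `S_R`-polynomials
of a Gröbner basis generate the syzygy module. -/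
theorem syzygies_of_groebnerBasis_PID
    {n : ℕ} {R : Type*} [CommRing R] [IsDomain R] [IsPrincipalIdealRing R]
    (m : MonomialOrder (Fin n))
    {M : ℕ} (f : Fin M → MvPolynomial (Fin n) R)
    (hG : IsGroebnerBasis m (Ideal.span (Set.range f)) f)
    (l u v : Fin M → Fin M → R)
    (hlcm : ∀ i j : Fin M, i < j →
      IsLcmChoice (mLC m (f i)) (mLC m (f j)) (l i j) (u i j) (v i j))
    (q : Fin M → Fin M → (Fin M → MvPolynomial (Fin n) R))
    (hq : ∀ i j : Fin M, i < j →
      sPolyPID m f u v i j = ∑ t, q i j t * f t ∧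
      (∀ t, q i j t * f t ≠ 0 →
        mDeg m (q i j t) + mDeg m (f t) ≼[m] mDeg m (sPolyPID m f u v i j)) ∧
      (sPolyPID m f u v i j = 0 → q i j = 0))
    (rr : Fin M → Fin M → (Fin M → MvPolynomial (Fin n) R))
    (hrr : ∀ i j : Fin M, rr i j =
      Pi.single i (MvPolynomial.monomial
        ((mDeg m (f i) ⊔ mDeg m (f j)) - mDeg m (f i)) (u i j))
      - Pi.single j (MvPolynomial.monomial
        ((mDeg m (f i) ⊔ mDeg m (f j)) - mDeg m (f j)) (v i j))
      - q i j)
    (w : Fin M → MvPolynomial (Fin n) R) :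
    (∑ t, w t * f t = 0) ↔
      w ∈ Submodule.span (MvPolynomial (Fin n) R)
        {h | ∃ i j : Fin M, i < j ∧ h = rr i j} := by
  have hf : ∀ t, f t ≠ 0 := hG.1
  have hrr' : ∀ i j, rr i j = m.liftedLcmSyzygy f u v i j - q i j := hrr
  have hker : ∀ i j, i < j → rr i j ∈ LinearMap.ker (Fintype.linearCombination _ f) := by
    intro i j hij
    rw [LinearMap.mem_ker, hrr', map_sub, linearCombination_liftedLcmSyzygy, (hq i j hij).1,
      Fintype.linearCombination_apply, sub_eq_zero]
    rfl
  have hbelow : ∀ i j, i < j → m.liftedLcmSyzygy f u v i j - rr i j ∈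
      m.weightedBelow f (m.degree (f i) ⊔ m.degree (f j)) := fun i j hij => by
    have hlc := hlcm i j hij
    rw [hrr', sub_sub_cancel]
    exact mem_weightedBelow_of_degree_le_sPolyPID hf
      (by rw [mul_comm, ← hlc.1, hlc.2.1, mul_comm]) (hq i j hij).2.1 (hq i j hij).2.2
  rw [← m.ker_linearCombination_eq_span hf hlcm hker hbelow, LinearMap.mem_ker,
    Fintype.linearCombination_apply]
  rfl
end
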